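/- For every natural number n and every odd natural number m, m^n = Σ_{k=0}^{n} S_B(n,k) · (m-1)(m-3)⋯(m-2k+1), where the empty product (k=0) equals 1. -/

import Mathlib

open Finset

/-- The set `[±n] = {±1, …, ±n}` as a finset of integers. -/
noncomputable def pmSet (n : ℕ) : Finset ℤ := (Finset.Icc (-(n:ℤ)) (n:ℤ)).erase 0

/-- Negation of a set: `-C`. -/
def negSet (C : Finset ℤ) : Finset ℤ := C.image (fun x => -x)

/-- A signed partition of `[±n]`: a set partition of `[±n]` closed under block
negation, with at most one self-negative block (the zero-block). -/
def IsSignedPartition (n : ℕ) (P : Finpartition (pmSet n)) : Prop :=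
  (∀ C ∈ P.parts, negSet C ∈ P.parts) ∧
  (P.parts.filter (fun C => negSet C = C)).card ≤ 1

/-- `SB n k`: the type-B Stirling number of the second kind, i.e. the number of
signed partitions of `[±n]` with exactly `k` pairs of nonzero blocks. -/
noncomputable def SB (n k : ℕ) : ℕ :=
  Nat.card {P : Finpartition (pmSet n) //
    IsSignedPartition n P ∧ (P.parts.filter (fun C => negSet C ≠ C)).card = 2 * k}

/-!
Write `m = 2t + 1`; both sides count the maps `f : {1, …, n} → {-t, …, t}`. The fibres of the
odd extension of `f` to `[±n]` form a signed partition, the fibre of `0` being the self-negative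
block. Conversely, an odd map whose fibres are the blocks of a signed partition with `k` pairs of
nonzero blocks amounts to a choice, for one block out of each pair, of a nonzero value in
`{-t, …, t}`, the absolute values being distinct: there are
`2^k t(t-1)⋯(t-k+1) = (m-1)(m-3)⋯(m-2k+1)` such choices.
-/

namespace Finpartition

variable {α β : Type*} [DecidableEq α] {s : Finset α}

theorem parts_eq_image_part (P : Finpartition s) : P.parts = s.image P.part := by
  ext C
  refine ⟨fun hC => ?_, fun hC => ?_⟩
  · obtain ⟨a, ha, rfl⟩ := P.part_surjOn hC
    exact mem_image_of_mem _ ha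
  · obtain ⟨a, ha, rfl⟩ := mem_image.1 hC
    exact P.part_mem.2 ha

theorem ofSetSetoid_ker_eq_iff {g : α → β} [DecidableRel (Setoid.ker g)]
    {Q : Finpartition s} :
    ofSetSetoid (Setoid.ker g) s = Q ↔ ∀ a ∈ s, ∀ b ∈ s, (g a = g b ↔ b ∈ Q.part a) := by
  constructor
  · rintro rfl a ha b hb
    simp [mem_part_ofSetSetoid_iff_rel, ha, hb, Setoid.ker_def]
  · intro h
    ext1
    rw [parts_eq_image_part, parts_eq_image_part]
    refine image_congr fun a ha => ?_
    ext b
    rw [mem_part_ofSetSetoid_iff_rel, Setoid.ker_def]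
    exact ⟨fun ⟨_, hb, hab⟩ => (h a ha b hb).1 hab,
      fun hb => ⟨ha, Q.part_subset a hb, (h a ha b (Q.part_subset a hb)).2 hb⟩⟩

end Finpartition

section SignedLabels

variable (α : Type*) [Fintype α] [DecidableEq α] (t : ℕ)

noncomputable def signedLabels : Finset (α → ℤ) :=
  {L ∈ Fintype.piFinset fun _ => Icc (-t : ℤ) t |
    (∀ a, L a ≠ 0) ∧ Function.Injective fun a => |L a|}

variable {α t} in
lemma mem_signedLabels {L : α → ℤ} :
    L ∈ signedLabels α t ↔
      (∀ a, |L a| ≤ t) ∧ (∀ a, L a ≠ 0) ∧ Function.Injective fun a => |L a| := by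
  simp [signedLabels, abs_le]

noncomputable def signedLabelsEquiv :
    signedLabels α t ≃ (α ↪ Icc (1 : ℤ) t) × (α → Bool) :=
  have abs_signed (b : Bool) (x : Icc (1 : ℤ) t) : |if b then (x : ℤ) else -x| = x := by
    have := (mem_Icc.1 x.2).1
    rw [apply_ite abs, abs_neg, ite_self]
    exact abs_of_pos (by omega)
  { toFun L :=
      (⟨fun a => ⟨|L.1 a|, mem_Icc.2 ⟨Int.one_le_abs ((mem_signedLabels.1 L.2).2.1 a),
          (mem_signedLabels.1 L.2).1 a⟩⟩,
        Function.Injective.of_comp (f := Subtype.val) (mem_signedLabels.1 L.2).2.2⟩,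
        fun a => decide (0 < L.1 a))
    invFun es := ⟨fun a => if es.2 a then (es.1 a : ℤ) else -(es.1 a : ℤ), by
      refine mem_signedLabels.2 ⟨fun a => ?_, fun a => ?_, fun a b h => ?_⟩
      · rw [abs_signed]
        exact (mem_Icc.1 (es.1 a).2).2
      · rw [← abs_pos, abs_signed]
        exact (mem_Icc.1 (es.1 a).2).1
      · beta_reduce at h
        rw [abs_signed, abs_signed] at h
        exact es.1.injective (Subtype.ext h)⟩
    left_inv L := by
      have := (mem_signedLabels.1 L.2).2.1
      ext a
      change (if decide (0 < L.1 a) then |L.1 a| else -|L.1 a|) = L.1 a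
      split_ifs with h
      · exact abs_of_pos (by simpa using h)
      · rw [abs_of_neg (lt_of_le_of_ne (by simpa using h) (this a))]; ring
    right_inv es := by
      ext a
      · exact abs_signed _ _
      · have := (mem_Icc.1 (es.1 a).2).1
        change decide (0 < if es.2 a then (es.1 a : ℤ) else -(es.1 a : ℤ)) = es.2 a
        split_ifs with h <;> simp [h] <;> omega }

theorem card_signedLabels :
    #(signedLabels α t) = 2 ^ Fintype.card α * t.descFactorial (Fintype.card α) := by
  rw [← Fintype.card_coe, Fintype.card_congr (signedLabelsEquiv α t), Fintype.card_prod,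
    Fintype.card_embedding_eq, Fintype.card_fun, Fintype.card_coe, Int.card_Icc,
    Fintype.card_bool, mul_comm]
  congr
  omega

end SignedLabels

section

variable {n t : ℕ}

lemma mem_pmSet {x : ℤ} : x ∈ pmSet n ↔ x ≠ 0 ∧ -(n : ℤ) ≤ x ∧ x ≤ n := by
  simp [pmSet]

@[simp]
lemma neg_mem_pmSet {x : ℤ} : -x ∈ pmSet n ↔ x ∈ pmSet n := by
  simp only [mem_pmSet]
  omega

lemma card_pmSet : #(pmSet n) = 2 * n := by
  rw [pmSet, card_erase_of_mem (by simp), Int.card_Icc]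
  omega

@[simp]
lemma mem_negSet {C : Finset ℤ} {x : ℤ} : x ∈ negSet C ↔ -x ∈ C := by
  simp [negSet, neg_eq_iff_eq_neg]

@[simp]
lemma negSet_negSet (C : Finset ℤ) : negSet (negSet C) = C := by
  ext
  simp

lemma natCast_add_one_mem_pmSet (i : Fin n) : (i : ℤ) + 1 ∈ pmSet n := by
  rw [mem_pmSet]
  omega

lemma exists_eq_or_eq_neg_of_mem_pmSet {x : ℤ} (hx : x ∈ pmSet n) :
    ∃ i : Fin n, x = i + 1 ∨ x = -(i + 1) := by
  rw [mem_pmSet] at hx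
  refine ⟨⟨x.natAbs - 1, by omega⟩, ?_⟩
  simp only
  omega

def oddExt (f : Fin n → ℤ) (x : ℤ) : ℤ :=
  x.sign * if h : x.natAbs - 1 < n then f ⟨x.natAbs - 1, h⟩ else 0

lemma oddExt_neg (f : Fin n → ℤ) (x : ℤ) : oddExt f (-x) = -oddExt f x := by
  simp only [oddExt, Int.natAbs_neg, Int.sign_neg]
  split_ifs <;> ring

lemma oddExt_natCast_add_one (f : Fin n → ℤ) (i : Fin n) : oddExt f (i + 1) = f i := by
  have h : ((i : ℤ) + 1).natAbs - 1 = i := by omega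
  simp [oddExt, h, Int.sign_eq_one_of_pos (by omega : (0 : ℤ) < i + 1)]

lemma oddExt_restrict {h : ℤ → ℤ} (hodd : ∀ x, h (-x) = -h x) {x : ℤ} (hx : x ∈ pmSet n) :
    oddExt (fun i : Fin n => h (i + 1)) x = h x := by
  obtain ⟨i, rfl | rfl⟩ := exists_eq_or_eq_neg_of_mem_pmSet hx
  · exact oddExt_natCast_add_one _ i
  · rw [oddExt_neg, oddExt_natCast_add_one, hodd]

lemma abs_oddExt_le {f : Fin n → ℤ} (hf : ∀ i, |f i| ≤ t) (x : ℤ) : |oddExt f x| ≤ t := by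
  have hsign : |x.sign| ≤ 1 := by
    rcases lt_trichotomy x 0 with h | rfl | h <;>
      simp [Int.sign_eq_neg_one_of_neg, Int.sign_eq_one_of_pos, *]
  rw [oddExt, abs_mul]
  split_ifs
  · exact (mul_le_of_le_one_left (abs_nonneg _) hsign).trans (hf _)
  · simp

open Classical in
noncomputable def oddPartition (f : Fin n → ℤ) : Finpartition (pmSet n) :=
  .ofSetSetoid (Setoid.ker (oddExt f)) (pmSet n)

def IsFiberPartition (Q : Finpartition (pmSet n)) (g : ℤ → ℤ) : Prop :=
  ∀ x ∈ pmSet n, ∀ y ∈ pmSet n, (g x = g y ↔ y ∈ Q.part x)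

lemma oddPartition_eq_iff {f : Fin n → ℤ} {Q : Finpartition (pmSet n)} :
    oddPartition f = Q ↔ IsFiberPartition Q (oddExt f) := by
  classical
  exact Finpartition.ofSetSetoid_ker_eq_iff

lemma mem_part_oddPartition {f : Fin n → ℤ} {x y : ℤ} :
    y ∈ (oddPartition f).part x ↔ x ∈ pmSet n ∧ y ∈ pmSet n ∧ oddExt f x = oddExt f y := by
  rw [oddPartition, Finpartition.mem_part_ofSetSetoid_iff_rel, Setoid.ker_def]

lemma isSignedPartition_oddPartition (f : Fin n → ℤ) : IsSignedPartition n (oddPartition f) := by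
  set P := oddPartition f
  constructor
  · intro C hC
    obtain ⟨x, hx, rfl⟩ := P.part_surjOn hC
    convert P.part_mem.2 (neg_mem_pmSet.2 hx) using 1
    ext y
    simp only [mem_negSet, mem_part_oddPartition, neg_mem_pmSet, oddExt_neg, neg_eq_iff_eq_neg,
      P]
  · refine card_le_one.2 fun C hC D hD => ?_
    have zero_of_self_neg : ∀ x ∈ pmSet n, negSet (P.part x) = P.part x → oddExt f x = 0 := by
      intro x hx hneg
      have hmem : -x ∈ P.part x := by rw [← hneg, mem_negSet, neg_neg]; exact P.mem_part hx
      have := (mem_part_oddPartition.1 hmem).2.2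
      rw [oddExt_neg] at this
      omega
    obtain ⟨hC, hCneg⟩ := mem_filter.1 hC
    obtain ⟨hD, hDneg⟩ := mem_filter.1 hD
    obtain ⟨x, hx, rfl⟩ := P.part_surjOn hC
    obtain ⟨y, hy, rfl⟩ := P.part_surjOn hD
    refine P.part_eq_of_mem (P.part_mem.2 hy) (mem_part_oddPartition.2 ⟨hy, hx, ?_⟩)
    rw [zero_of_self_neg x hx hCneg, zero_of_self_neg y hy hDneg]

section SignedPartition

variable {Q : Finpartition (pmSet n)}

lemma part_neg (hQ : IsSignedPartition n Q) (x : ℤ) : Q.part (-x) = negSet (Q.part x) := by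
  by_cases hx : x ∈ pmSet n
  · exact Q.part_eq_of_mem (hQ.1 _ (Q.part_mem.2 hx)) (by simpa using Q.mem_part hx)
  · rw [Q.part_eq_empty.2 hx, Q.part_eq_empty.2 (by simpa using hx)]
    rfl

def nonzeroParts (Q : Finpartition (pmSet n)) : Finset (Finset ℤ) :=
  Q.parts.filter fun C => negSet C ≠ C

/-- One block out of each pair `{C, -C}` of nonzero blocks. -/
def reprParts (Q : Finpartition (pmSet n)) : Finset (Finset ℤ) :=
  (nonzeroParts Q).filter fun C => C.min < (negSet C).min

lemma mem_parts_of_mem_reprParts {C : Finset ℤ} (hC : C ∈ reprParts Q) : C ∈ Q.parts :=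
  (mem_filter.1 (mem_filter.1 hC).1).1

lemma negSet_notMem_reprParts {C : Finset ℤ} (hC : C ∈ reprParts Q) :
    negSet C ∉ reprParts Q := by
  intro hC'
  simp only [reprParts, mem_filter, negSet_negSet] at hC hC'
  exact lt_asymm hC.2 hC'.2

lemma negSet_mem_nonzeroParts (hQ : IsSignedPartition n Q) {C : Finset ℤ}
    (hC : C ∈ nonzeroParts Q) : negSet C ∈ nonzeroParts Q := by
  obtain ⟨hCQ, hCneg⟩ := mem_filter.1 hC
  exact mem_filter.2 ⟨hQ.1 C hCQ, by rwa [negSet_negSet, ne_comm]⟩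

lemma disjoint_negSet (hQ : IsSignedPartition n Q) {C : Finset ℤ} (hC : C ∈ nonzeroParts Q) :
    Disjoint C (negSet C) := by
  obtain ⟨hCQ, hCneg⟩ := mem_filter.1 hC
  exact Q.disjoint hCQ (hQ.1 C hCQ) (Ne.symm hCneg)

lemma negSet_mem_reprParts_of_notMem (hQ : IsSignedPartition n Q) {C : Finset ℤ}
    (hC : C ∈ nonzeroParts Q) (hCr : C ∉ reprParts Q) : negSet C ∈ reprParts Q := by
  have hCQ := (mem_filter.1 hC).1
  have hmin : C.min ≠ (negSet C).min := by
    intro h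
    obtain ⟨a, ha⟩ := min_of_nonempty (Q.nonempty_of_mem_parts hCQ)
    exact disjoint_left.1 (disjoint_negSet hQ hC) (mem_of_min ha) (mem_of_min (h ▸ ha))
  refine mem_filter.2 ⟨negSet_mem_nonzeroParts hQ hC, ?_⟩
  rw [negSet_negSet]
  exact lt_of_le_of_ne (not_lt.1 fun h => hCr (mem_filter.2 ⟨hC, h⟩)) hmin.symm

lemma card_nonzeroParts (hQ : IsSignedPartition n Q) :
    #(nonzeroParts Q) = 2 * #(reprParts Q) := by
  have hswap : #{C ∈ nonzeroParts Q | ¬ C.min < (negSet C).min} = #(reprParts Q) := by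
    refine card_nbij' negSet negSet (fun C hC => ?_) (fun C hC => ?_)
      (fun C _ => negSet_negSet C) (fun C _ => negSet_negSet C)
    · obtain ⟨hC, hCr⟩ := mem_filter.1 hC
      exact negSet_mem_reprParts_of_notMem hQ hC fun h => hCr (mem_filter.1 h).2
    · obtain ⟨hC, hlt⟩ := mem_filter.1 hC
      rw [mem_coe, mem_filter, negSet_negSet]
      exact ⟨negSet_mem_nonzeroParts hQ hC, not_lt.2 hlt.le⟩
  rw [← card_filter_add_card_filter_not (fun C => C.min < (negSet C).min), hswap, reprParts]
  ring

lemma negSet_eq_self_or_exists_reprParts (hQ : IsSignedPartition n Q) {D : Finset ℤ}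
    (hD : D ∈ Q.parts) : negSet D = D ∨ ∃ C : reprParts Q, D = C ∨ D = negSet C := by
  by_cases hneg : negSet D = D
  · exact Or.inl hneg
  by_cases hDr : D ∈ reprParts Q
  · exact Or.inr ⟨⟨D, hDr⟩, Or.inl rfl⟩
  · exact Or.inr ⟨⟨negSet D, negSet_mem_reprParts_of_notMem hQ (mem_filter.2 ⟨hD, hneg⟩) hDr⟩,
      Or.inr (negSet_negSet D).symm⟩

end SignedPartition

section Labels

variable {Q : Finpartition (pmSet n)} {g : ℤ → ℤ}

lemma IsFiberPartition.apply_eq (hg : IsFiberPartition Q g) {C : Finset ℤ} (hC : C ∈ Q.parts)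
    {x y : ℤ} (hx : x ∈ C) (hy : y ∈ C) : g x = g y := by
  refine (hg x (Q.le hC hx) y (Q.le hC hy)).2 ?_
  rwa [Q.part_eq_of_mem hC hx]

def oddLabel (L : reprParts Q → ℤ) (D : Finset ℤ) : ℤ :=
  if h : D ∈ reprParts Q then L ⟨D, h⟩
  else if h : negSet D ∈ reprParts Q then -L ⟨negSet D, h⟩ else 0

variable {L : reprParts Q → ℤ}

lemma oddLabel_of_mem (C : reprParts Q) : oddLabel L C = L C :=
  dif_pos C.2

lemma oddLabel_negSet (D : Finset ℤ) : oddLabel L (negSet D) = -oddLabel L D := by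
  by_cases hD : D ∈ reprParts Q
  · simp [oddLabel, hD, negSet_notMem_reprParts hD]
  · by_cases hD' : negSet D ∈ reprParts Q <;> simp [oddLabel, hD, hD']

lemma oddLabel_negSet_of_mem (C : reprParts Q) : oddLabel L (negSet C) = -L C := by
  rw [oddLabel_negSet, oddLabel_of_mem]

lemma oddLabel_eq_zero_of_negSet_eq {D : Finset ℤ} (hD : negSet D = D) : oddLabel L D = 0 := by
  have := oddLabel_negSet (L := L) D
  rw [hD] at this
  omega

lemma abs_oddLabel_le (hL : ∀ C, |L C| ≤ t) (D : Finset ℤ) : |oddLabel L D| ≤ t := by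
  unfold oddLabel
  split_ifs
  · exact hL _
  · rw [abs_neg]; exact hL _
  · simp

lemma oddLabel_injOn (hQ : IsSignedPartition n Q) (hL0 : ∀ C, L C ≠ 0)
    (hLinj : Function.Injective fun C => |L C|) : Set.InjOn (oddLabel L) Q.parts := by
  have abs_eq {D : Finset ℤ} {C : reprParts Q} (h : D = C ∨ D = negSet C) :
      |oddLabel L D| = |L C| := by
    rcases h with rfl | rfl
    · rw [oddLabel_of_mem]
    · rw [oddLabel_negSet_of_mem, abs_neg]
  intro D hD D' hD' h
  rcases negSet_eq_self_or_exists_reprParts hQ hD with hD0 | ⟨C, hDC⟩ <;>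
    rcases negSet_eq_self_or_exists_reprParts hQ hD' with hD0' | ⟨C', hDC'⟩
  · exact card_le_one.1 hQ.2 D (mem_filter.2 ⟨hD, hD0⟩) D' (mem_filter.2 ⟨hD', hD0'⟩)
  · rw [oddLabel_eq_zero_of_negSet_eq hD0, eq_comm, ← abs_eq_zero, abs_eq hDC'] at h
    exact absurd (abs_eq_zero.1 h) (hL0 C')
  · rw [oddLabel_eq_zero_of_negSet_eq hD0', ← abs_eq_zero, abs_eq hDC] at h
    exact absurd (abs_eq_zero.1 h) (hL0 C)
  · obtain rfl : C = C' := hLinj (by simpa only [abs_eq hDC, abs_eq hDC'] using congrArg abs h)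
    rcases hDC with rfl | rfl <;> rcases hDC' with rfl | rfl
    all_goals first
      | rfl
      | rw [oddLabel_of_mem, oddLabel_negSet_of_mem] at h
        exact absurd (by omega) (hL0 C)

noncomputable def reprElem (C : reprParts Q) : ℤ :=
  (C : Finset ℤ).min' (Q.nonempty_of_mem_parts (mem_parts_of_mem_reprParts C.2))

lemma reprElem_mem (C : reprParts Q) : reprElem C ∈ (C : Finset ℤ) :=
  min'_mem _ _

lemma reprElem_mem_pmSet (C : reprParts Q) : reprElem C ∈ pmSet n :=
  Q.le (mem_parts_of_mem_reprParts C.2) (reprElem_mem C)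

lemma part_reprElem (C : reprParts Q) : Q.part (reprElem C) = C :=
  Q.part_eq_of_mem (mem_parts_of_mem_reprParts C.2) (reprElem_mem C)

noncomputable def labelOf (Q : Finpartition (pmSet n)) (g : ℤ → ℤ) (C : reprParts Q) : ℤ :=
  g (reprElem C)

lemma oddLabel_labelOf_part (hQ : IsSignedPartition n Q) (hodd : ∀ x, g (-x) = -g x)
    (hg : IsFiberPartition Q g) {x : ℤ} (hx : x ∈ pmSet n) :
    oddLabel (labelOf Q g) (Q.part x) = g x := by
  have hD := Q.part_mem.2 hx
  have hxD := Q.mem_part hx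
  rcases negSet_eq_self_or_exists_reprParts hQ hD with hD0 | ⟨C, hDC | hDC⟩
  · have := hg.apply_eq hD hxD (by rw [← hD0, mem_negSet, neg_neg]; exact hxD)
    rw [hodd] at this
    rw [oddLabel_eq_zero_of_negSet_eq hD0]
    omega
  · rw [hDC, oddLabel_of_mem]
    exact hg.apply_eq (mem_parts_of_mem_reprParts C.2) (reprElem_mem C) (hDC ▸ hxD)
  · rw [hDC, oddLabel_negSet_of_mem, labelOf, ← hodd]
    exact hg.apply_eq (hDC ▸ hD) (by simpa using reprElem_mem C) (hDC ▸ hxD)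

lemma labelOf_mem_signedLabels (hQ : IsSignedPartition n Q) (hodd : ∀ x, g (-x) = -g x)
    (hg : IsFiberPartition Q g) (hbound : ∀ x, |g x| ≤ t) :
    labelOf Q g ∈ signedLabels (reprParts Q) t := by
  have mem_of_apply_eq (C : reprParts Q) {y : ℤ} (hy : y ∈ pmSet n)
      (h : g (reprElem C) = g y) : y ∈ (C : Finset ℤ) := by
    rw [← part_reprElem C]
    exact (hg _ (reprElem_mem_pmSet C) y hy).1 h
  refine mem_signedLabels.2 ⟨fun C => hbound _, fun C h0 => ?_, fun C D h => ?_⟩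
  · have hneg : -reprElem C ∈ (C : Finset ℤ) :=
      mem_of_apply_eq C (neg_mem_pmSet.2 (reprElem_mem_pmSet C))
        (by rw [hodd, show g (reprElem C) = 0 from h0, neg_zero])
    exact disjoint_left.1 (disjoint_negSet hQ (mem_filter.1 C.2).1) (reprElem_mem C)
      (mem_negSet.2 hneg)
  · rcases abs_eq_abs.1 h with h | h
    · exact Subtype.ext (Q.eq_of_mem_parts (mem_parts_of_mem_reprParts C.2)
        (mem_parts_of_mem_reprParts D.2) (mem_of_apply_eq C (reprElem_mem_pmSet D) h)
        (reprElem_mem D))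
    · have hD : (D : Finset ℤ) = negSet C :=
        Q.eq_of_mem_parts (mem_parts_of_mem_reprParts D.2)
          (hQ.1 _ (mem_parts_of_mem_reprParts C.2)) (reprElem_mem D)
          (mem_negSet.2 (mem_of_apply_eq C (neg_mem_pmSet.2 (reprElem_mem_pmSet D))
            (by rw [hodd]; exact h)))
      exact absurd (hD ▸ D.2) (negSet_notMem_reprParts C.2)

lemma labelOf_eq (hL : ∀ x ∈ pmSet n, g x = oddLabel L (Q.part x)) : labelOf Q g = L := by
  funext C
  rw [labelOf, hL _ (reprElem_mem_pmSet C), part_reprElem, oddLabel_of_mem]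

lemma isFiberPartition_of_eq_oddLabel (hQ : IsSignedPartition n Q) (hL0 : ∀ C, L C ≠ 0)
    (hLinj : Function.Injective fun C => |L C|)
    (hL : ∀ x ∈ pmSet n, g x = oddLabel L (Q.part x)) : IsFiberPartition Q g := by
  intro x hx y hy
  rw [hL x hx, hL y hy,
    (oddLabel_injOn hQ hL0 hLinj).eq_iff (Q.part_mem.2 hx) (Q.part_mem.2 hy),
    Q.mem_part_iff_part_eq_part hy hx, eq_comm]

end Labels

theorem card_filter_oddPartition_eq {Q : Finpartition (pmSet n)} (hQ : IsSignedPartition n Q) :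
    #{f ∈ Fintype.piFinset fun _ : Fin n => Icc (-t : ℤ) t | oddPartition f = Q} =
      #(signedLabels (reprParts Q) t) := by
  have oddExt_eq (L : reprParts Q → ℤ) {x : ℤ} (hx : x ∈ pmSet n) :
      oddExt (fun i : Fin n => oddLabel L (Q.part (i + 1))) x = oddLabel L (Q.part x) :=
    oddExt_restrict (h := fun y => oddLabel L (Q.part y))
      (fun y => by rw [part_neg hQ, oddLabel_negSet]) hx
  refine card_nbij' (fun f => labelOf Q (oddExt f)) (fun L i => oddLabel L (Q.part (i + 1)))
    (fun f hf => ?_) (fun L hL => ?_) (fun f hf => ?_) (fun L hL => ?_)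
  · obtain ⟨hbox, hf⟩ := mem_filter.1 hf
    exact labelOf_mem_signedLabels hQ (oddExt_neg f) (oddPartition_eq_iff.1 hf)
      (abs_oddExt_le fun i => abs_le.2 (mem_Icc.1 (Fintype.mem_piFinset.1 hbox i)))
  · obtain ⟨hbound, hL0, hLinj⟩ := mem_signedLabels.1 hL
    refine mem_filter.2 ⟨Fintype.mem_piFinset.2 fun i => ?_, oddPartition_eq_iff.2 ?_⟩
    · exact mem_Icc.2 (abs_le.1 (abs_oddLabel_le hbound _))
    · exact isFiberPartition_of_eq_oddLabel hQ hL0 hLinj fun x hx => oddExt_eq L hx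
  · funext i
    exact (oddLabel_labelOf_part hQ (oddExt_neg f) (oddPartition_eq_iff.1 (mem_filter.1 hf).2)
      (natCast_add_one_mem_pmSet i)).trans (oddExt_natCast_add_one f i)
  · exact labelOf_eq fun x hx => oddExt_eq L hx

theorem card_reprParts_le {Q : Finpartition (pmSet n)} (hQ : IsSignedPartition n Q) :
    #(reprParts Q) ≤ n := by
  have := (card_nonzeroParts hQ).symm.trans_le ((card_filter_le _ _).trans Q.card_parts_le_card)
  rw [card_pmSet] at this
  omega

end

open Classical in
theorem SB_eq_card (n k : ℕ) :
    SB n k = #{Q : Finpartition (pmSet n) | IsSignedPartition n Q ∧ #(reprParts Q) = k} := by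
  rw [SB, Nat.card_eq_fintype_card, Fintype.card_subtype]
  refine congrArg card (filter_congr fun Q _ => and_congr_right fun hQ => ?_)
  change #(nonzeroParts Q) = 2 * k ↔ _
  rw [card_nonzeroParts hQ]
  omega

theorem two_mul_add_one_pow_eq_sum_SB (n t : ℕ) :
    (2 * t + 1) ^ n = ∑ k ∈ range (n + 1), SB n k * (2 ^ k * t.descFactorial k) := by
  classical
  set box := Fintype.piFinset fun _ : Fin n => Icc (-t : ℤ) t
  set signed := ({Q | IsSignedPartition n Q} : Finset (Finpartition (pmSet n)))
  have hbox : #box = (2 * t + 1) ^ n := by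
    rw [Fintype.card_piFinset, prod_const, card_univ, Fintype.card_fin, Int.card_Icc]
    congr
    omega
  calc (2 * t + 1) ^ n = ∑ Q ∈ signed, #{f ∈ box | oddPartition f = Q} := by
        rw [← hbox]
        exact card_eq_sum_card_fiberwise fun f _ =>
          mem_filter.2 ⟨mem_univ _, isSignedPartition_oddPartition f⟩
    _ = ∑ Q ∈ signed, 2 ^ #(reprParts Q) * t.descFactorial #(reprParts Q) := by
        refine sum_congr rfl fun Q hQ => ?_
        rw [card_filter_oddPartition_eq (mem_filter.1 hQ).2, card_signedLabels, Fintype.card_coe]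
    _ = ∑ k ∈ range (n + 1), ∑ Q ∈ signed with #(reprParts Q) = k,
          2 ^ k * t.descFactorial k := by
        rw [← sum_fiberwise_of_maps_to fun Q hQ =>
          mem_range.2 (Nat.lt_succ_of_le (card_reprParts_le (mem_filter.1 hQ).2))]
        refine sum_congr rfl fun k _ => sum_congr rfl fun Q hQ => ?_
        rw [(mem_filter.1 hQ).2]
    _ = ∑ k ∈ range (n + 1), SB n k * (2 ^ k * t.descFactorial k) := by
        refine sum_congr rfl fun k _ => ?_
        rw [sum_const, smul_eq_mul, SB_eq_card, filter_filter]

theorem prod_range_two_mul_add_one_sub (t k : ℕ) :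
    ∏ j ∈ range k, ((2 * t + 1 : ℤ) - (2 * j + 1)) = 2 ^ k * t.descFactorial k := by
  calc ∏ j ∈ range k, ((2 * t + 1 : ℤ) - (2 * j + 1)) = ∏ j ∈ range k, (2 * ((t : ℤ) - j)) :=
        prod_congr rfl fun j _ => by ring
    _ = 2 ^ k * t.descFactorial k := by
        rw [prod_mul_distrib, prod_const, card_range, ← descPochhammer_eval_eq_prod_range,
          descPochhammer_eval_eq_descFactorial]

/-- For every natural `n` and odd natural `m`:
`m^n = Σ_{k=0}^{n} S_B(n,k) · (m-1)(m-3)⋯(m-2k+1)` (over the integers). -/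
theorem typeB_stirling_identity_odd (n m : ℕ) (hm : Odd m) :
    (m : ℤ) ^ n = ∑ k ∈ Finset.range (n + 1),
      (SB n k : ℤ) * ∏ j ∈ Finset.range k, ((m : ℤ) - (2 * j + 1)) := by
  obtain ⟨t, rfl⟩ := hm
  have := congrArg (Nat.cast : ℕ → ℤ) (two_mul_add_one_pow_eq_sum_SB n t)
  push_cast at this ⊢
  simp only [this, prod_range_two_mul_add_one_sub]
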